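/- Let v ∈ ℤ^3 be a nonzero vector with |v| ∈ ℤ. Then there exists w ∈ ℤ^3 with (v,w) = 0 and |w| = |v|. -/

import Mathlib

open Zsqrtd

local notation "ℤ[i]" => GaussianInt

set_option synthInstance.maxHeartbeats 1000000 in
lemma prime_of_norm_prime' (π : ℤ[i]) (hp : Prime (Zsqrtd.norm π)) : Prime π := by
  rw [← _root_.irreducible_iff_prime]
  constructor
  · intro hu
    rw [← Zsqrtd.norm_eq_one_iff' (by norm_num) π] at hu
    rw [hu] at hp
    exact hp.not_unit isUnit_one
  · intro x y hxy
    have h := hp.irreducible.isUnit_or_isUnit (a := x.norm) (b := y.norm) (by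
      rw [← Zsqrtd.norm_mul, ← hxy])
    rcases h with h | h
    · left
      rw [Int.isUnit_iff] at h
      rcases h with h | h
      · exact (Zsqrtd.norm_eq_one_iff' (by norm_num) x).mp h
      · exact absurd h (by have := GaussianInt.norm_nonneg x; omega)
    · right
      rw [Int.isUnit_iff] at h
      rcases h with h | h
      · exact (Zsqrtd.norm_eq_one_iff' (by norm_num) y).mp h
      · exact absurd h (by have := GaussianInt.norm_nonneg y; omega)

lemma inert_dvd (p : ℕ) (hp : p.Prime) (h3 : p % 4 = 3) (z : ℤ[i])
    (h : (p : ℤ) ∣ z.norm) : (p : ℤ[i]) ∣ z := by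
  haveI : Fact p.Prime := ⟨hp⟩
  have hπ : Prime (p : ℤ[i]) :=
    GaussianInt.prime_of_nat_prime_of_mod_four_eq_three p h3
  have h2 : (p : ℤ[i]) ∣ z * star z := by
    rw [← Zsqrtd.norm_eq_mul_conj]
    obtain ⟨r, hr⟩ := h
    exact ⟨(r : ℤ[i]), by rw [hr]; push_cast; ring⟩
  rcases hπ.2.2 _ _ h2 with h | h
  · exact h
  · obtain ⟨r, hr⟩ := h
    refine ⟨star r, ?_⟩
    have := congrArg star hr
    rw [star_star, star_mul'] at this
    simpa using this

lemma even_fact (p : ℕ) (hp : p.Prime) (h3 : p % 4 = 3) :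
    ∀ N : ℕ, ∀ z : ℤ[i], z ≠ 0 → z.norm.natAbs = N →
      Even (N.factorization p) := by
  intro N
  induction N using Nat.strong_induction_on with
  | _ N ih =>
    intro z hz hN
    by_cases hdvd : p ∣ N
    · have hdvd' : (p : ℤ) ∣ z.norm := by
        rw [Int.natCast_dvd, hN]
        exact hdvd
      obtain ⟨z', rfl⟩ := inert_dvd p hp h3 z hdvd'
      have hz' : z' ≠ 0 := by
        rintro rfl; simp at hz
      have hNe : N = p * p * z'.norm.natAbs := by
        rw [← hN, Zsqrtd.norm_mul, Zsqrtd.norm_natCast, Int.natAbs_mul, Int.natAbs_mul]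
        simp
      have hzn : z'.norm.natAbs ≠ 0 := by
        simpa [Int.natAbs_eq_zero, GaussianInt.norm_eq_zero] using hz'
      have hlt : z'.norm.natAbs < N := by
        rw [hNe]
        have h2 : 2 ≤ p := hp.two_le
        calc z'.norm.natAbs < 4 * z'.norm.natAbs := by omega
        _ ≤ p * p * z'.norm.natAbs := by
            apply Nat.mul_le_mul_right; nlinarith
      obtain ⟨c, hc⟩ := ih _ hlt z' hz' rfl
      rw [hNe, Nat.factorization_mul (Nat.mul_ne_zero hp.pos.ne' hp.pos.ne') hzn, Finsupp.add_apply,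
        Nat.factorization_mul hp.pos.ne' hp.pos.ne', Finsupp.add_apply,
        hp.factorization_self, hc]
      exact ⟨c + 1, by ring⟩
    · rw [Nat.factorization_eq_zero_of_not_dvd hdvd]
      exact Even.zero

lemma split_lemma :
    ∀ m : ℕ, ∀ k : ℕ, ∀ z : ℤ[i], z ≠ 0 → z.norm = (m : ℤ) * k →
    (∀ p : ℕ, p.Prime → p % 4 = 3 → Even (m.factorization p)) →
    ∃ z₁ z₂ : ℤ[i], z = z₁ * z₂ ∧ z₁.norm = m ∧ z₂.norm = k := by
  intro m
  induction m using Nat.strong_induction_on with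
  | _ m ih =>
    intro k z hz hnorm hfac
    rcases Nat.eq_zero_or_pos m with rfl | hm
    · exfalso
      apply hz
      rw [← GaussianInt.norm_eq_zero, hnorm]
      simp
    rcases Nat.lt_or_ge m 2 with hm2 | hm2
    · interval_cases m
      exact ⟨1, z, by simp, by simp, by simpa using hnorm⟩
    obtain ⟨p, hp, hpm⟩ := Nat.exists_prime_and_dvd (by omega : m ≠ 1)
    haveI : Fact p.Prime := ⟨hp⟩
    by_cases h3 : p % 4 = 3
    · -- p² ∣ m, and (p : ℤ[i]) ∣ z
      have hfp := hfac p hp h3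
      have hfp1 : 1 ≤ m.factorization p :=
        (Nat.Prime.factorization_pos_of_dvd hp (by omega) hpm)
      have hfp2 : 2 ≤ m.factorization p := by
        rcases hfp with ⟨c, hc⟩; omega
      have hp2m : p ^ 2 ∣ m := (Nat.Prime.pow_dvd_iff_le_factorization hp (by omega)).mpr hfp2
      obtain ⟨m', hm'⟩ := hp2m
      have hdvd' : (p : ℤ) ∣ z.norm := by
        rw [hnorm]
        exact Dvd.dvd.mul_right (by exact_mod_cast Int.natCast_dvd_natCast.mpr hpm) _
      obtain ⟨z', rfl⟩ := inert_dvd p hp h3 z hdvd'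
      have hz' : z' ≠ 0 := by rintro rfl; simp at hz
      have hm'0 : m' ≠ 0 := by rintro rfl; rw [mul_zero] at hm'; omega
      have hnorm' : z'.norm = (m' : ℤ) * k := by
        have h1 : ((p : ℤ[i]) * z').norm = (p : ℤ) * p * z'.norm := by
          rw [Zsqrtd.norm_mul, Zsqrtd.norm_natCast]
        rw [h1, hm'] at hnorm
        push_cast at hnorm ⊢
        have hpne : (p : ℤ) ≠ 0 := by exact_mod_cast hp.pos.ne'
        have := mul_left_cancel₀ (mul_ne_zero hpne hpne) (by linarith [hnorm] : (p:ℤ)*p*z'.norm = (p:ℤ)*p*((m':ℤ)*k))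
        linarith [this]
      have hfac' : ∀ q : ℕ, q.Prime → q % 4 = 3 → Even (m'.factorization q) := by
        intro q hq hq3
        have hfq := hfac q hq hq3
        have : m.factorization q = (p ^ 2).factorization q + m'.factorization q := by
          rw [hm', Nat.factorization_mul (pow_ne_zero 2 hp.pos.ne') hm'0, Finsupp.add_apply]
        rw [this, hp.factorization_pow, Finsupp.single_apply] at hfq
        by_cases hqp : p = q
        · rw [if_pos hqp] at hfq
          rcases hfq with ⟨c, hc⟩
          exact ⟨c - 1, by omega⟩
        · rwa [if_neg hqp, zero_add] at hfq
      have hlt : m' < m := by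
        have := hp.two_le
        rw [hm']
        have h1 : 1 * m' < p ^ 2 * m' :=
          (Nat.mul_lt_mul_right (Nat.pos_of_ne_zero hm'0)).mpr (by nlinarith)
        simpa using h1
      obtain ⟨z₁, z₂, hze, hz1, hz2⟩ := ih m' hlt k z' hz' hnorm' hfac'
      refine ⟨(p : ℤ[i]) * z₁, z₂, by rw [hze]; ring, ?_, hz2⟩
      rw [Zsqrtd.norm_mul, Zsqrtd.norm_natCast, hz1, hm']
      push_cast
      ring
    · -- p = 2 or p ≡ 1 [MOD 4]: get π with norm p
      obtain ⟨u, v, huv⟩ := Nat.Prime.sq_add_sq h3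
      set π : ℤ[i] := ⟨(u : ℤ), (v : ℤ)⟩ with hπdef
      have hπnorm : π.norm = (p : ℤ) := by
        rw [Zsqrtd.norm_def]
        push_cast
        nlinarith [huv]
      have hπprime : Prime π := by
        apply prime_of_norm_prime'
        rw [hπnorm]
        exact Nat.prime_iff_prime_int.mp hp
      have hπz : π ∣ z * star z := by
        rw [← Zsqrtd.norm_eq_mul_conj, hnorm]
        obtain ⟨m'', hm''⟩ := hpm
        refine ⟨star π * ((m'' : ℤ[i]) * (k : ℤ[i])), ?_⟩
        have : π * star π = ((p : ℤ) : ℤ[i]) := by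
          rw [← Zsqrtd.norm_eq_mul_conj, hπnorm]
        push_cast
        rw [← mul_assoc, this]
        rw [hm'']
        push_cast
        ring
      -- get ρ with norm p dividing z
      have hρ : ∃ ρ : ℤ[i], ρ.norm = (p : ℤ) ∧ ρ ∣ z := by
        rcases hπprime.2.2 _ _ hπz with h | h
        · exact ⟨π, hπnorm, h⟩
        · refine ⟨star π, by rw [Zsqrtd.norm_conj]; exact hπnorm, ?_⟩
          obtain ⟨r, hr⟩ := h
          refine ⟨star r, ?_⟩
          have := congrArg star hr
          rw [star_star, star_mul'] at this
          simpa using this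
      obtain ⟨ρ, hρnorm, z', rfl⟩ := hρ
      have hz' : z' ≠ 0 := by rintro rfl; simp at hz
      obtain ⟨m'', hm''⟩ := hpm
      have hm''0 : m'' ≠ 0 := by rintro rfl; simp at hm''; omega
      have hnorm' : z'.norm = (m'' : ℤ) * k := by
        rw [Zsqrtd.norm_mul, hρnorm, hm''] at hnorm
        push_cast at hnorm
        have hpne : (p : ℤ) ≠ 0 := by exact_mod_cast hp.pos.ne'
        exact mul_left_cancel₀ hpne (by linarith [hnorm])
      have hfac' : ∀ q : ℕ, q.Prime → q % 4 = 3 → Even (m''.factorization q) := by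
        intro q hq hq3
        have hfq := hfac q hq hq3
        have hqp : q ≠ p := by rintro rfl; exact h3 hq3
        have : m.factorization q = p.factorization q + m''.factorization q := by
          rw [hm'', Nat.factorization_mul hp.pos.ne' hm''0, Finsupp.add_apply]
        rwa [this, Nat.factorization_eq_zero_of_not_dvd (by
          simpa [Nat.prime_dvd_prime_iff_eq hq hp] using hqp), zero_add] at hfq
      have hlt : m'' < m := by
        have := hp.two_le
        rw [hm'']
        have h1 : 1 * m'' < p * m'' :=
          (Nat.mul_lt_mul_right (Nat.pos_of_ne_zero hm''0)).mpr (by omega)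
        simpa using h1
      obtain ⟨z₁, z₂, hze, hz1, hz2⟩ := ih m'' hlt k z' hz' hnorm' hfac'
      refine ⟨ρ * z₁, z₂, by rw [hze]; ring, ?_, hz2⟩
      rw [Zsqrtd.norm_mul, hρnorm, hz1, hm'']
      push_cast
      ring

lemma dvd_of_dvd_sq_add_sq (p : ℕ) (hp : p.Prime) (h3 : p % 4 = 3) (a b : ℤ)
    (h : (p : ℤ) ∣ a ^ 2 + b ^ 2) : (p : ℤ) ∣ a ∧ (p : ℤ) ∣ b := by
  have hz : (p : ℤ) ∣ (Zsqrtd.norm (⟨a, b⟩ : ℤ[i])) := by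
    rw [Zsqrtd.norm_def]
    convert h using 1
    ring
  obtain ⟨w, hw⟩ := inert_dvd p hp h3 _ hz
  have hre := congrArg Zsqrtd.re hw
  have him := congrArg Zsqrtd.im hw
  simp [Zsqrtd.re_mul, Zsqrtd.im_mul] at hre him
  exact ⟨⟨w.re, hre⟩, ⟨w.im, him⟩⟩

set_option maxHeartbeats 1000000 in
lemma core (a b c n : ℤ) (ha0 : a ≠ 0) (hb0 : b ≠ 0) (hn : 0 < n)
    (hea : Even a) (heb : Even b) (hoc : Odd c)
    (hco : ∀ p : ℕ, p.Prime → p % 4 = 3 → ¬((p : ℤ) ∣ a ∧ (p : ℤ) ∣ b ∧ (p : ℤ) ∣ c))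
    (heq : a ^ 2 + b ^ 2 + c ^ 2 = n ^ 2) :
    ∃ wa wb wc : ℤ, a * wa + b * wb + c * wc = 0 ∧
      wa ^ 2 + wb ^ 2 + wc ^ 2 = n ^ 2 := by
  have hab : 0 < a ^ 2 + b ^ 2 := by positivity
  have hc2 : c ^ 2 < n ^ 2 := by nlinarith
  have hnc : 0 < n - c := by nlinarith
  have hnc' : 0 < n + c := by nlinarith
  set z : ℤ[i] := ⟨a, b⟩ with hzdef
  have hznorm : z.norm = (n - c) * (n + c) := by
    rw [Zsqrtd.norm_def]
    simp only [hzdef]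
    nlinarith [heq]
  set m : ℕ := (n - c).toNat with hmdef
  set k : ℕ := (n + c).toNat with hkdef
  have hmc : (m : ℤ) = n - c := Int.toNat_of_nonneg hnc.le
  have hkc : (k : ℤ) = n + c := Int.toNat_of_nonneg hnc'.le
  have hm0 : m ≠ 0 := by omega
  have hk0 : k ≠ 0 := by omega
  have hz0 : z ≠ 0 := by
    intro h
    apply ha0
    have := congrArg Zsqrtd.re h
    simpa [hzdef] using this
  have hznorm' : z.norm = (m : ℤ) * k := by rw [hmc, hkc, hznorm]
  have hnatabs : z.norm.natAbs = m * k := by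
    rw [hznorm']
    push_cast
    rw [Int.natAbs_mul]
    simp
  -- even multiplicity condition
  have hfac : ∀ p : ℕ, p.Prime → p % 4 = 3 → Even (m.factorization p) := by
    intro p hp h3
    by_cases hpm : p ∣ m
    · by_cases hpk : p ∣ k
      · exfalso
        have hdc : (p : ℤ) ∣ n - c := by rw [← hmc]; exact_mod_cast Int.natCast_dvd_natCast.mpr hpm
        have hdc' : (p : ℤ) ∣ n + c := by rw [← hkc]; exact_mod_cast Int.natCast_dvd_natCast.mpr hpk
        have hp2 : (p : ℤ) ∣ 2 * n := by
          have := dvd_add hdc hdc'; rwa [show n - c + (n + c) = 2 * n by ring] at this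
        have hp2' : (p : ℤ) ∣ 2 * c := by
          have := dvd_sub hdc' hdc; rwa [show n + c - (n - c) = 2 * c by ring] at this
        have hpodd : ¬ ((p : ℤ) ∣ 2) := by
          intro h2
          have h2' : p ∣ 2 := by
            have : (p : ℤ) ∣ ((2 : ℕ) : ℤ) := by exact_mod_cast h2
            exact_mod_cast Int.natCast_dvd_natCast.mp this
          have hple := Nat.le_of_dvd (by norm_num) h2'
          have := hp.two_le
          omega
        have hpn : (p : ℤ) ∣ n := ((Int.Prime.dvd_mul' hp hp2).resolve_left hpodd)
        have hpc : (p : ℤ) ∣ c := ((Int.Prime.dvd_mul' hp hp2').resolve_left hpodd)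
        have hpab : (p : ℤ) ∣ a ^ 2 + b ^ 2 := by
          have : a ^ 2 + b ^ 2 = n ^ 2 - c ^ 2 := by linarith
          rw [this]
          exact dvd_sub (by rw [sq]; exact hpn.mul_right n) (by rw [sq]; exact hpc.mul_right c)
        obtain ⟨hpa, hpb⟩ := dvd_of_dvd_sq_add_sq p hp h3 a b hpab
        exact hco p hp h3 ⟨hpa, hpb, hpc⟩
      · -- k has no factor p, so factorization of m equals that of m*k
        have htot := even_fact p hp h3 (z.norm.natAbs) z hz0 rfl
        rw [hnatabs, Nat.factorization_mul hm0 hk0, Finsupp.add_apply,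
          Nat.factorization_eq_zero_of_not_dvd hpk, add_zero] at htot
        exact htot
    · rw [Nat.factorization_eq_zero_of_not_dvd hpm]
      exact Even.zero
  obtain ⟨z₁, z₂, hze, hz1, hz2⟩ := split_lemma m k z hz0 hznorm' hfac
  set s : ℤ := z₁.re
  set t : ℤ := z₁.im
  set P : ℤ := z₂.re
  set Q : ℤ := z₂.im
  have ha' : a = s * P - t * Q := by
    have := congrArg Zsqrtd.re hze
    simp only [hzdef, Zsqrtd.re_mul] at this
    linarith [this]
  have hb' : b = s * Q + t * P := by
    have := congrArg Zsqrtd.im hze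
    simp only [hzdef, Zsqrtd.im_mul] at this
    linarith [this]
  have h1 : s ^ 2 + t ^ 2 = n - c := by
    have := hz1
    rw [Zsqrtd.norm_def] at this
    rw [hmc] at this
    nlinarith [this]
  have h2 : P ^ 2 + Q ^ 2 = n + c := by
    have := hz2
    rw [Zsqrtd.norm_def] at this
    rw [hkc] at this
    nlinarith [this]
  have hcc : 2 * c = P ^ 2 + Q ^ 2 - s ^ 2 - t ^ 2 := by linarith
  have hnn : 2 * n = P ^ 2 + Q ^ 2 + s ^ 2 + t ^ 2 := by linarith
  -- parity
  have hA : Even (a ^ 2) := by rw [sq]; exact hea.mul_left a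
  have hB : Even (b ^ 2) := by rw [sq]; exact heb.mul_left b
  have hC : Odd (c ^ 2) := by rw [sq]; exact hoc.mul hoc
  have hodd2 : Odd (n ^ 2) := by rw [← heq]; exact (hA.add hB).add_odd hC
  have hon : Odd n := by
    rcases Int.even_or_odd n with he | ho
    · exfalso
      have hh : Even (n ^ 2) := by rw [sq]; exact he.mul_left n
      exact (Int.not_odd_iff_even.mpr hh) hodd2
    · exact ho
  have hev1 : Even (s ^ 2 + t ^ 2) := by rw [h1]; exact hon.sub_odd hoc
  have hev2 : Even (P ^ 2 + Q ^ 2) := by rw [h2]; exact hon.add_odd hoc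
  have hts : Even (t ^ 2 - s ^ 2) := by
    rcases hev1 with ⟨r, hr⟩
    exact ⟨r - s ^ 2, by linarith⟩
  have hQP : Even (Q ^ 2 - P ^ 2) := by
    rcases hev2 with ⟨r, hr⟩
    exact ⟨r - P ^ 2, by linarith⟩
  obtain ⟨D, hD⟩ : ∃ D : ℤ, 2 * D = Q ^ 2 - P ^ 2 + (t ^ 2 - s ^ 2) := by
    rcases hQP with ⟨u, hu⟩
    rcases hts with ⟨v, hv⟩
    exact ⟨u + v, by linarith⟩
  refine ⟨P * Q + s * t, D, P * t - Q * s, ?_, ?_⟩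
  · have h2g : 2 * ((s * P - t * Q) * (P * Q + s * t) + (s * Q + t * P) * D
        + c * (P * t - Q * s)) = 0 := by
      linear_combination (s * Q + t * P) * hD + (P * t - Q * s) * hcc
    rw [ha', hb']
    linarith
  · have h4 : 4 * ((P * Q + s * t) ^ 2 + D ^ 2 + (P * t - Q * s) ^ 2) = 4 * n ^ 2 := by
      linear_combination (2 * D + (Q ^ 2 - P ^ 2 + t ^ 2 - s ^ 2)) * hD
        - (2 * n + (P ^ 2 + Q ^ 2 + s ^ 2 + t ^ 2)) * hnn
    linarith

lemma sq_mod4_even {x : ℤ} (h : Even x) : x ^ 2 % 4 = 0 := by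
  rcases h with ⟨r, rfl⟩
  have h1 : (r + r) ^ 2 = 4 * r ^ 2 := by ring
  rw [h1]
  exact Int.mul_emod_right 4 _

lemma sq_mod4_odd {x : ℤ} (h : Odd x) : x ^ 2 % 4 = 1 := by
  rcases h with ⟨r, rfl⟩
  have h1 : (2 * r + 1) ^ 2 = 1 + 4 * (r ^ 2 + r) := by ring
  rw [h1]
  rw [Int.add_mul_emod_self_left]
  norm_num

lemma no_two_odd {x y z w : ℤ} (hx : Odd x) (hy : Odd y)
    (h : x ^ 2 + y ^ 2 + z ^ 2 = w ^ 2) : False := by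
  have f1 := sq_mod4_odd hx
  have f2 := sq_mod4_odd hy
  have f3 : z ^ 2 % 4 = 0 ∨ z ^ 2 % 4 = 1 := by
    rcases Int.even_or_odd z with h' | h'
    exacts [Or.inl (sq_mod4_even h'), Or.inr (sq_mod4_odd h')]
  have f4 : w ^ 2 % 4 = 0 ∨ w ^ 2 % 4 = 1 := by
    rcases Int.even_or_odd w with h' | h'
    exacts [Or.inl (sq_mod4_even h'), Or.inr (sq_mod4_odd h')]
  generalize x ^ 2 = A at f1 h
  generalize y ^ 2 = B at f2 h
  generalize z ^ 2 = C at f3 h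
  generalize w ^ 2 = E at f4 h
  omega

lemma parity3 {x y z w : ℤ} (h : x ^ 2 + y ^ 2 + z ^ 2 = w ^ 2) :
    (Even x ∧ Even y ∧ Even z) ∨ (Odd x ∧ Even y ∧ Even z) ∨
      (Even x ∧ Odd y ∧ Even z) ∨ (Even x ∧ Even y ∧ Odd z) := by
  rcases Int.even_or_odd x with hx | hx <;> rcases Int.even_or_odd y with hy | hy <;>
    rcases Int.even_or_odd z with hz | hz
  · exact Or.inl ⟨hx, hy, hz⟩
  · exact Or.inr (Or.inr (Or.inr ⟨hx, hy, hz⟩))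
  · exact Or.inr (Or.inr (Or.inl ⟨hx, hy, hz⟩))
  · exact absurd h (fun h' => no_two_odd (z := x) (w := w) hy hz (by linarith))
  · exact Or.inr (Or.inl ⟨hx, hy, hz⟩)
  · exact absurd h (fun h' => no_two_odd (z := y) (w := w) hx hz (by linarith))
  · exact absurd h (fun h' => no_two_odd (z := z) (w := w) hx hy (by linarith))
  · exact absurd h (fun h' => no_two_odd (z := z) (w := w) hx hy (by linarith))

set_option maxHeartbeats 1000000 in
/-- If v ∈ ℤ³ is nonzero with |v| ∈ ℤ, then there is w ∈ ℤ³ with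
(v,w) = 0 and |w| = |v|. -/
theorem stmt_5 (v : Fin 3 → ℤ) (hv : v ≠ 0)
    (hlen : ∃ l : ℤ, l ^ 2 = ∑ i, (v i) ^ 2) :
    ∃ w : Fin 3 → ℤ, (∑ i, v i * w i = 0) ∧ ∑ i, (w i) ^ 2 = ∑ i, (v i) ^ 2 := by
  obtain ⟨l, hl⟩ := hlen
  simp only [Fin.sum_univ_three] at hl ⊢
  by_cases h0 : v 0 = 0
  · refine ⟨![l, 0, 0], ?_, ?_⟩ <;>
      simp [Matrix.cons_val_zero, Matrix.cons_val_one, h0, hl]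
  by_cases h1 : v 1 = 0
  · refine ⟨![0, l, 0], ?_, ?_⟩ <;>
      simp [Matrix.cons_val_zero, Matrix.cons_val_one, h1, hl]
  by_cases h2 : v 2 = 0
  · refine ⟨![0, 0, l], ?_, ?_⟩ <;>
      simp [Matrix.cons_val_zero, Matrix.cons_val_one, h2, hl]
  set a : ℤ := v 0 with hadef
  set b : ℤ := v 1 with hbdef
  set c : ℤ := v 2 with hcdef
  set g : ℕ := Int.gcd (Int.gcd a b : ℤ) c with hgdef
  have hga : (g : ℤ) ∣ a := (Int.gcd_dvd_left _ _).trans (Int.gcd_dvd_left _ _)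
  have hgb : (g : ℤ) ∣ b := (Int.gcd_dvd_left _ _).trans (Int.gcd_dvd_right _ _)
  have hgc : (g : ℤ) ∣ c := Int.gcd_dvd_right _ _
  obtain ⟨a₁, ha⟩ := hga
  obtain ⟨b₁, hb⟩ := hgb
  obtain ⟨c₁, hc⟩ := hgc
  have hg0 : g ≠ 0 := by
    intro hg
    apply h0
    show a = 0
    rw [ha, hg]
    simp
  have hgz : (g : ℤ) ≠ 0 := by exact_mod_cast hg0
  have hgdvdl : (g : ℤ) ∣ l := by
    rw [← Int.pow_dvd_pow_iff (two_ne_zero)]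
    exact ⟨a₁ ^ 2 + b₁ ^ 2 + c₁ ^ 2, by rw [hl, ha, hb, hc]; ring⟩
  obtain ⟨l₁, hll⟩ := hgdvdl
  have heq1 : a₁ ^ 2 + b₁ ^ 2 + c₁ ^ 2 = l₁ ^ 2 := by
    have h' : (g : ℤ) ^ 2 * (a₁ ^ 2 + b₁ ^ 2 + c₁ ^ 2) = (g : ℤ) ^ 2 * l₁ ^ 2 := by
      rw [ha, hb, hc, hll] at hl
      nlinarith [hl]
    exact mul_left_cancel₀ (pow_ne_zero 2 hgz) h'
  have ha₁0 : a₁ ≠ 0 := by rintro rfl; rw [mul_zero] at ha; exact h0 ha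
  have hb₁0 : b₁ ≠ 0 := by rintro rfl; rw [mul_zero] at hb; exact h1 hb
  have hc₁0 : c₁ ≠ 0 := by rintro rfl; rw [mul_zero] at hc; exact h2 hc
  have hl₁0 : l₁ ≠ 0 := by
    rintro rfl
    have h00 : a₁ ^ 2 + b₁ ^ 2 + c₁ ^ 2 = 0 := by simpa using heq1
    nlinarith [sq_nonneg a₁, sq_nonneg b₁, sq_nonneg c₁, sq_pos_of_ne_zero ha₁0]
  set n : ℤ := |l₁| with hndef
  have hnpos : 0 < n := abs_pos.mpr hl₁0
  have hn2 : n ^ 2 = l₁ ^ 2 := sq_abs l₁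
  have heq2 : a₁ ^ 2 + b₁ ^ 2 + c₁ ^ 2 = n ^ 2 := by rw [hn2]; exact heq1
  -- no common prime factor
  have hcop : ∀ p : ℕ, 2 ≤ p → (p : ℤ) ∣ a₁ → (p : ℤ) ∣ b₁ → (p : ℤ) ∣ c₁ → False := by
    intro p hp2 hpa hpb hpc
    have hda : ((g * p : ℕ) : ℤ) ∣ a := by
      obtain ⟨x, hx⟩ := hpa
      exact ⟨x, by rw [ha, hx]; push_cast; ring⟩
    have hdb : ((g * p : ℕ) : ℤ) ∣ b := by
      obtain ⟨x, hx⟩ := hpb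
      exact ⟨x, by rw [hb, hx]; push_cast; ring⟩
    have hdc : ((g * p : ℕ) : ℤ) ∣ c := by
      obtain ⟨x, hx⟩ := hpc
      exact ⟨x, by rw [hc, hx]; push_cast; ring⟩
    have hdg : ((g * p : ℕ) : ℤ) ∣ (g : ℤ) := by
      rw [hgdef]
      exact Int.dvd_coe_gcd (Int.dvd_coe_gcd hda hdb) hdc
    have hdg' : g * p ∣ g := by exact_mod_cast hdg
    have := Nat.le_of_dvd (Nat.pos_of_ne_zero hg0) hdg'
    nlinarith [Nat.pos_of_ne_zero hg0]
  -- parity analysis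
  rcases parity3 heq2 with ⟨hpa, hpb, hpc⟩ | ⟨hpa, hpb, hpc⟩ | ⟨hpa, hpb, hpc⟩ | ⟨hpa, hpb, hpc⟩
  · exfalso
    refine hcop 2 le_rfl ?_ ?_ ?_
    · exact hpa.two_dvd
    · exact hpb.two_dvd
    · exact hpc.two_dvd
  · -- a₁ odd
    obtain ⟨x, y, zz, hw1, hw2⟩ := core b₁ c₁ a₁ n hb₁0 hc₁0 hnpos hpb hpc hpa
      (fun p hp h3 hdvd => hcop p hp.two_le hdvd.2.2 hdvd.1 hdvd.2.1) (by linarith [heq2])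
    refine ⟨![(g : ℤ) * zz, (g : ℤ) * x, (g : ℤ) * y], ?_, ?_⟩ <;>
      simp only [Matrix.cons_val_zero, Matrix.cons_val_one, Matrix.head_cons,
        Matrix.cons_val_two, Matrix.tail_cons]
    · rw [ha, hb, hc]; linear_combination ((g : ℤ) * g) * hw1
    · rw [← hl, hll]; linear_combination ((g : ℤ) * g) * hw2 + ((g : ℤ) * g) * hn2
  · -- b₁ odd
    obtain ⟨x, y, zz, hw1, hw2⟩ := core a₁ c₁ b₁ n ha₁0 hc₁0 hnpos hpa hpc hpb
      (fun p hp h3 hdvd => hcop p hp.two_le hdvd.1 hdvd.2.2 hdvd.2.1) (by linarith [heq2])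
    refine ⟨![(g : ℤ) * x, (g : ℤ) * zz, (g : ℤ) * y], ?_, ?_⟩ <;>
      simp only [Matrix.cons_val_zero, Matrix.cons_val_one, Matrix.head_cons,
        Matrix.cons_val_two, Matrix.tail_cons]
    · rw [ha, hb, hc]; linear_combination ((g : ℤ) * g) * hw1
    · rw [← hl, hll]; linear_combination ((g : ℤ) * g) * hw2 + ((g : ℤ) * g) * hn2
  · -- c₁ odd
    obtain ⟨x, y, zz, hw1, hw2⟩ := core a₁ b₁ c₁ n ha₁0 hb₁0 hnpos hpa hpb hpc
      (fun p hp h3 hdvd => hcop p hp.two_le hdvd.1 hdvd.2.1 hdvd.2.2) heq2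
    refine ⟨![(g : ℤ) * x, (g : ℤ) * y, (g : ℤ) * zz], ?_, ?_⟩ <;>
      simp only [Matrix.cons_val_zero, Matrix.cons_val_one, Matrix.head_cons,
        Matrix.cons_val_two, Matrix.tail_cons]
    · rw [ha, hb, hc]; linear_combination ((g : ℤ) * g) * hw1
    · rw [← hl, hll]; linear_combination ((g : ℤ) * g) * hw2 + ((g : ℤ) * g) * hn2
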